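/- Let T > 0, s ∈ (0,2), q > 2, and c ≥ 1. Let m : (0,T) → ℝ be continuous with m(t) = -c/t + A(t) where A(t) → 0 as t → 0⁺, and let k : [0,T] → ℝ be continuous. Suppose φ : [0,T] → ℝ satisfies: φ(t) > 0 for all t ∈ [0,T]; φ is α-Hölder continuous on [0,T] for some α ∈ (0,1) (i.e., there exists R > 0 with |φ(x) - φ(y)| ≤ R·|x-y|^α for all x, y ∈ [0,T]); φ is twice continuously differentiable on (0,T); and φ''(t) - m(t)·φ'(t) - k(t)·φ(t) + φ(t)^{q-1}/t^s = 0 for all t ∈ (0,T). Then φ has a local maximum at 0: there exists t₀ ∈ (0,T) such that φ(t) ≤ φ(0) for all t ∈ [0,t₀]. -/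

import Mathlib

/-!
Near `0` the Hardy term `φ ^ (q - 1) / t ^ s` dominates, so the equation gives `φ'' < m φ'`, while
`m t ≈ -c / t` with `c ≥ 1`. Hence, for `γ = 1 - α / 2 < c`, the function `t ^ γ * φ' t` decreases
wherever `φ' > 0`. If `φ' b > 0` for some small `b`, then `φ' t ≥ κ t ^ (-γ)` on `(0, b]`, so
`φ (2ε) - φ ε ≳ ε ^ (1 - γ)`. Since `1 - γ < α`, this contradicts `α`-Hölder continuity as `ε → 0`.
So `φ' ≤ 0` near `0`, and `φ` is nonincreasing there.
-/

open Set Filter Topology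

theorem continuousOn_of_dist_le_rpow {X Y : Type*} [PseudoMetricSpace X] [PseudoMetricSpace Y]
    {f : X → Y} {s : Set X} {α R : ℝ} (hα : 0 < α)
    (hf : ∀ x ∈ s, ∀ y ∈ s, dist (f x) (f y) ≤ R * dist x y ^ α) : ContinuousOn f s := by
  intro x hx
  rw [ContinuousWithinAt, tendsto_iff_dist_tendsto_zero]
  have hbound : Tendsto (fun y => R * dist y x ^ α) (𝓝 x) (𝓝 0) := by
    have hdist : Tendsto (fun y => dist y x) (𝓝 x) (𝓝 0) :=
      tendsto_iff_dist_tendsto_zero.1 tendsto_id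
    simpa [Real.zero_rpow hα.ne'] using (hdist.rpow_const (Or.inr hα.le)).const_mul R
  exact squeeze_zero' (.of_forall fun _ => dist_nonneg)
    (eventually_mem_nhdsWithin.mono fun y hy => hf y hy x hx) (hbound.mono_left nhdsWithin_le_nhds)

theorem le_image_of_deriv_neg_of_eq_right {g g' : ℝ → ℝ} {a b : ℝ}
    (hg : ContinuousOn g (Icc a b)) (hg' : ∀ x ∈ Ioc a b, HasDerivAt g (g' x) x)
    (hneg : ∀ x ∈ Ioc a b, g x = g b → g' x < 0) : ∀ x ∈ Icc a b, g b ≤ g x := by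
  intro x hx
  have hmem : ∀ y ∈ Ico (-b) (-a), -y ∈ Ioc a b :=
    fun y hy => ⟨by linarith [hy.2], by linarith [hy.1]⟩
  -- The fencing lemma runs forward in time, so apply it to the reflection `y ↦ -g (-y)`.
  have hfence := image_le_of_deriv_right_lt_deriv_boundary' (f := fun y => -g (-y))
    (f' := fun y => g' (-y)) (B := fun _ => -g b) (B' := 0)
    (((hg.comp continuousOn_neg) fun y hy => ⟨by linarith [hy.2], by linarith [hy.1]⟩).neg)
    (fun y hy => by
      have := ((hg' (-y) (hmem y hy)).comp y (hasDerivAt_neg y)).neg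
      simp only [mul_neg, mul_one, neg_neg] at this
      exact this.hasDerivWithinAt)
    (by simp) continuousOn_const (fun _ _ => hasDerivWithinAt_const _ _ _)
    (fun y hy hyb => hneg (-y) (hmem y hy) (neg_inj.1 hyb))
    (show -x ∈ Icc (-b) (-a) from ⟨by linarith [hx.2], by linarith [hx.1]⟩)
  simpa using hfence

theorem tendsto_rpow_div_rpow_nhdsGT_zero {f : ℝ → ℝ} {a p s : ℝ}
    (hf : Tendsto f (𝓝[>] 0) (𝓝 a)) (ha : 0 < a) (hs : 0 < s) :
    Tendsto (fun t => f t ^ p / t ^ s) (𝓝[>] 0) atTop := by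
  refine ((hf.rpow_const (Or.inl ha.ne')).pos_mul_atTop (Real.rpow_pos_of_pos ha p)
    (tendsto_rpow_neg_nhdsGT_zero (neg_lt_zero.2 hs))).congr' ?_
  filter_upwards [self_mem_nhdsWithin] with t (ht : 0 < t)
  rw [Real.rpow_neg ht.le, div_eq_mul_inv]

theorem eventually_mul_sub_rpow_div_rpow_neg {k φ : ℝ → ℝ} {T p s : ℝ} (hT : 0 < T) (hs : 0 < s)
    (hk : ContinuousOn k (Icc 0 T)) (hφ : ContinuousOn φ (Icc 0 T)) (hφ0 : 0 < φ 0) :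
    ∀ᶠ t in 𝓝[>] 0, k t * φ t - φ t ^ p / t ^ s < 0 := by
  have hnhds : 𝓝[>] (0 : ℝ) ≤ 𝓝[Icc 0 T] 0 := nhdsWithin_le_of_mem (Icc_mem_nhdsGT hT)
  have hφlim : Tendsto φ (𝓝[>] 0) (𝓝 (φ 0)) := (hφ 0 ⟨le_rfl, hT.le⟩).mono_left hnhds
  have hkφ : Tendsto (fun t => k t * φ t) (𝓝[>] 0) (𝓝 (k 0 * φ 0)) :=
    ((hk.mul hφ) 0 ⟨le_rfl, hT.le⟩).mono_left hnhds
  have hsing := tendsto_neg_atTop_atBot.comp (tendsto_rpow_div_rpow_nhdsGT_zero (p := p) hφlim hφ0 hs)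
  simpa only [sub_eq_add_neg, Function.comp_def] using (hkφ.add_atBot hsing).eventually_lt_atBot 0

theorem eventually_div_add_neg {m A : ℝ → ℝ} {c γ : ℝ} (hγ : γ < c)
    (hmA : ∀ᶠ t in 𝓝[>] 0, m t = -c / t + A t) (hA : Tendsto A (𝓝[>] 0) (𝓝 0)) :
    ∀ᶠ t in 𝓝[>] 0, γ / t + m t < 0 := by
  have hlim : Tendsto (fun t => γ - c + t * A t) (𝓝[>] 0) (𝓝 (γ - c + 0 * 0)) :=
    tendsto_const_nhds.add ((tendsto_nhdsWithin_of_tendsto_nhds tendsto_id).mul hA)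
  filter_upwards [hlim.eventually_lt_const (by linarith : γ - c + 0 * 0 < 0), hmA,
    self_mem_nhdsWithin] with t hlt hmt (ht : 0 < t)
  rw [hmt, show γ / t + (-c / t + A t) = (γ - c + t * A t) / t by field_simp; ring]
  exact div_neg_of_neg_of_pos hlt ht

theorem not_forall_div_rpow_le_deriv_of_holder {φ φ' : ℝ → ℝ} {α γ κ R b : ℝ}
    (hγ : 0 ≤ γ) (hαγ : 1 - α < γ) (hκ : 0 < κ) (hb : 0 < b)
    (hφ : ∀ x ∈ Ioo 0 b, HasDerivAt φ (φ' x) x)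
    (hHolder : ∀ x ∈ Ioo 0 b, ∀ y ∈ Ioo 0 b, |φ x - φ y| ≤ R * |x - y| ^ α) :
    ¬ ∀ x ∈ Ioo 0 b, κ / x ^ γ ≤ φ' x := by
  intro hlow
  -- Mean value theorem on `[ε, 2ε]` against the Hölder bound on the same interval.
  have hscaled : ∀ ε ∈ Ioo 0 (b / 2), κ / 2 ^ γ ≤ R * ε ^ (α + γ - 1) := by
    intro ε ⟨hε, hεb⟩
    have hsub : Icc ε (2 * ε) ⊆ Ioo 0 b := fun x hx => ⟨hε.trans_le hx.1, by linarith [hx.2]⟩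
    obtain ⟨ξ, hξ, hslope⟩ := exists_hasDerivAt_eq_slope φ φ' (by linarith : ε < 2 * ε)
      (fun x hx => (hφ x (hsub hx)).continuousAt.continuousWithinAt)
      (fun x hx => hφ x (hsub (Ioo_subset_Icc_self hx)))
    have hderiv : κ / (2 * ε) ^ γ ≤ φ' ξ :=
      (div_le_div_of_nonneg_left hκ.le (Real.rpow_pos_of_pos (hε.trans hξ.1) γ)
        (Real.rpow_le_rpow (hε.trans hξ.1).le hξ.2.le hγ)).trans
        (hlow ξ (hsub (Ioo_subset_Icc_self hξ)))
    have hincr : φ' ξ * ε ≤ R * ε ^ α := by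
      have := hHolder (2 * ε) (hsub ⟨by linarith, le_rfl⟩) ε (hsub ⟨le_rfl, by linarith⟩)
      rw [show 2 * ε - ε = ε by ring, abs_of_pos hε] at this
      rw [hslope, show 2 * ε - ε = ε by ring, div_mul_cancel₀ _ hε.ne']
      exact (le_abs_self _).trans this
    calc κ / 2 ^ γ = κ / (2 * ε) ^ γ * ε * ε ^ (γ - 1) := by
          rw [Real.mul_rpow zero_le_two hε.le, Real.rpow_sub_one hε.ne']
          field_simp
      _ ≤ R * ε ^ α * ε ^ (γ - 1) :=
          mul_le_mul_of_nonneg_right ((mul_le_mul_of_nonneg_right hderiv hε.le).trans hincr)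
            (Real.rpow_nonneg hε.le _)
      _ = R * ε ^ (α + γ - 1) := by rw [mul_assoc, ← Real.rpow_add hε]; ring_nf
  have hlim : Tendsto (fun ε => R * ε ^ (α + γ - 1)) (𝓝[>] 0) (𝓝 0) := by
    have hpos : 0 < α + γ - 1 := by linarith
    simpa [Real.zero_rpow hpos.ne'] using
      ((Real.continuousAt_rpow_const 0 _ (Or.inr hpos.le)).tendsto.mono_left
        nhdsWithin_le_nhds).const_mul R
  obtain ⟨ε, hεsmall, hε⟩ :=
    ((hlim.eventually_lt_const (div_pos hκ (Real.rpow_pos_of_pos two_pos γ))).and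
      (Ioo_mem_nhdsGT (half_pos hb))).exists
  exact (hscaled ε hε).not_gt hεsmall

theorem nonpos_of_deriv_lt_mul_of_holder {φ φ' φ'' m : ℝ → ℝ} {α γ R δ : ℝ}
    (hγ : 0 ≤ γ) (hαγ : 1 - α < γ)
    (hφ : ∀ x ∈ Ioo 0 δ, HasDerivAt φ (φ' x) x) (hφ' : ∀ x ∈ Ioo 0 δ, HasDerivAt φ' (φ'' x) x)
    (hsuper : ∀ x ∈ Ioo 0 δ, φ'' x < m x * φ' x) (hm : ∀ x ∈ Ioo 0 δ, γ / x + m x ≤ 0)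
    (hHolder : ∀ x ∈ Ioo 0 δ, ∀ y ∈ Ioo 0 δ, |φ x - φ y| ≤ R * |x - y| ^ α) :
    ∀ x ∈ Ioo 0 δ, φ' x ≤ 0 := by
  intro b hb
  by_contra! hpos
  -- Where `φ' > 0`, the weight `t ^ γ` makes `t ^ γ * φ' t` decreasing.
  set g : ℝ → ℝ := fun t => t ^ γ * φ' t
  have hg' (x : ℝ) (hx : x ∈ Ioo 0 δ) : HasDerivAt g (γ * x ^ (γ - 1) * φ' x + x ^ γ * φ'' x) x :=
    (Real.hasDerivAt_rpow_const (Or.inl hx.1.ne')).mul (hφ' x hx)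
  have hg'_neg (x : ℝ) (hx : x ∈ Ioo 0 δ) (hx' : 0 < φ' x) :
      γ * x ^ (γ - 1) * φ' x + x ^ γ * φ'' x < 0 := by
    have hxγ := Real.rpow_pos_of_pos hx.1 γ
    rw [Real.rpow_sub_one hx.1.ne', show γ * (x ^ γ / x) * φ' x + x ^ γ * φ'' x
      = x ^ γ * (γ / x * φ' x + φ'' x) by ring]
    exact mul_neg_of_pos_of_neg hxγ (by nlinarith [hsuper x hx, hm x hx])
  have hsub : Ioc 0 b ⊆ Ioo 0 δ := fun t ht => ⟨ht.1, ht.2.trans_lt hb.2⟩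
  have hgb : 0 < g b := mul_pos (Real.rpow_pos_of_pos hb.1 γ) hpos
  have hbarrier (x : ℝ) (hx : x ∈ Ioc 0 b) : g b ≤ g x := by
    have hsub' : Icc x b ⊆ Ioo 0 δ := fun t ht => hsub ⟨hx.1.trans_le ht.1, ht.2⟩
    refine le_image_of_deriv_neg_of_eq_right
      (fun t ht => (hg' t (hsub' ht)).continuousAt.continuousWithinAt)
      (fun t ht => hg' t (hsub' (Ioc_subset_Icc_self ht))) (fun t ht hgt => ?_) x ⟨le_rfl, hx.2⟩
    have ht : t ∈ Ioo 0 δ := hsub' (Ioc_subset_Icc_self ht)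
    exact hg'_neg t ht
      (pos_of_mul_pos_right (show 0 < g t from hgt ▸ hgb) (Real.rpow_nonneg ht.1.le γ))
  refine not_forall_div_rpow_le_deriv_of_holder hγ hαγ hgb hb.1
    (fun x hx => hφ x (hsub (Ioo_subset_Ioc_self hx)))
    (fun x hx y hy => hHolder x (hsub (Ioo_subset_Ioc_self hx)) y (hsub (Ioo_subset_Ioc_self hy)))
    fun x hx => ?_
  rw [div_le_iff₀ (Real.rpow_pos_of_pos hx.1 γ), mul_comm]
  exact hbarrier x (Ioo_subset_Ioc_self hx)

theorem ContDiffOn.hasDerivAt_deriv_deriv {f : ℝ → ℝ} {s : Set ℝ} (hf : ContDiffOn ℝ 2 f s)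
    (hs : IsOpen s) {x : ℝ} (hx : x ∈ s) : HasDerivAt (deriv f) (deriv (deriv f) x) x :=
  (((hf.deriv_of_isOpen hs (by norm_num : (1 : WithTop ℕ∞) + 1 ≤ 2)).differentiableOn
    one_ne_zero).differentiableAt (hs.mem_nhds hx)).hasDerivAt

theorem stmt_2_general (T s q c : ℝ) (hT : 0 < T) (hs0 : 0 < s)
    (hc : 1 ≤ c)
    (m : ℝ → ℝ)
    (A : ℝ → ℝ)
    (hmA : ∀ t ∈ Ioo 0 T, m t = -c / t + A t)
    (hA : Tendsto A (nhdsWithin 0 (Ioi 0)) (nhds 0))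
    (k : ℝ → ℝ) (hk : ContinuousOn k (Icc 0 T))
    (φ : ℝ → ℝ)
    (hφpos : ∀ t ∈ Icc 0 T, 0 < φ t)
    (hφHolder : ∃ α ∈ Ioo (0:ℝ) 1, ∃ R > (0:ℝ),
      ∀ x ∈ Icc 0 T, ∀ y ∈ Icc 0 T, |φ x - φ y| ≤ R * |x - y| ^ α)
    (hφC2 : ContDiffOn ℝ 2 φ (Ioo 0 T))
    (hODE : ∀ t ∈ Ioo 0 T,
      deriv (deriv φ) t - m t * deriv φ t - k t * φ t + φ t ^ (q - 1) / t ^ s = 0) :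
    ∃ t₀ ∈ Ioo 0 T, ∀ t ∈ Icc 0 t₀, φ t ≤ φ 0 := by
  obtain ⟨α, ⟨hα0, hα1⟩, R, -, hHolder⟩ := hφHolder
  have hφcont : ContinuousOn φ (Icc 0 T) :=
    continuousOn_of_dist_le_rpow hα0 (by simpa only [Real.dist_eq] using hHolder)
  have hsing : ∀ᶠ t in 𝓝[>] 0, k t * φ t - φ t ^ (q - 1) / t ^ s < 0 :=
    eventually_mul_sub_rpow_div_rpow_neg hT hs0 hk hφcont (hφpos 0 ⟨le_rfl, hT.le⟩)
  have hcoef : ∀ᶠ t in 𝓝[>] 0, (1 - α / 2) / t + m t < 0 :=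
    eventually_div_add_neg (by linarith) (eventually_of_mem (Ioo_mem_nhdsGT hT) hmA) hA
  obtain ⟨δ, hδ, hδsub⟩ := (mem_nhdsGT_iff_exists_mem_Ioc_Ioo_subset hT).1 (hsing.and hcoef)
  have hsub : Ioo 0 δ ⊆ Ioo 0 T := Ioo_subset_Ioo_right hδ.2
  have hφ' : ∀ x ∈ Ioo 0 δ, deriv φ x ≤ 0 := nonpos_of_deriv_lt_mul_of_holder (γ := 1 - α / 2)
    (by linarith) (by linarith)
    (fun x hx => ((hφC2.differentiableOn (by norm_num)).differentiableAt
      (isOpen_Ioo.mem_nhds (hsub hx))).hasDerivAt)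
    (fun x hx => hφC2.hasDerivAt_deriv_deriv isOpen_Ioo (hsub hx))
    (fun x hx => by linarith [hODE x (hsub hx), (hδsub hx).1]) (fun x hx => (hδsub hx).2.le)
    (fun x hx y hy => hHolder x (Ioo_subset_Icc_self (hsub hx)) y (Ioo_subset_Icc_self (hsub hy)))
  have hanti : AntitoneOn φ (Icc 0 δ) := by
    refine antitoneOn_of_deriv_nonpos (convex_Icc 0 δ) (hφcont.mono (Icc_subset_Icc_right hδ.2))
      ?_ (by rwa [interior_Icc])
    rw [interior_Icc]
    exact (hφC2.differentiableOn (by norm_num)).mono hsub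
  exact ⟨δ / 2, ⟨half_pos hδ.1, by linarith [hδ.2]⟩,
    fun t ht => hanti ⟨le_rfl, hδ.1.le⟩ ⟨ht.1, by linarith [ht.2, hδ.1]⟩ ht.1⟩

/-- ODE form of Lemma 2.1: a positive Hölder-continuous solution of the
Hardy–Sobolev ODE has a local maximum at the focal endpoint `0`. -/
theorem stmt_2 (T s q c : ℝ) (hT : 0 < T) (hs0 : 0 < s) (hs2 : s < 2)
    (hq : 2 < q) (hc : 1 ≤ c)
    (m : ℝ → ℝ) (hm : ContinuousOn m (Ioo 0 T))
    (A : ℝ → ℝ)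
    (hmA : ∀ t ∈ Ioo 0 T, m t = -c / t + A t)
    (hA : Tendsto A (nhdsWithin 0 (Ioi 0)) (nhds 0))
    (k : ℝ → ℝ) (hk : ContinuousOn k (Icc 0 T))
    (φ : ℝ → ℝ)
    (hφpos : ∀ t ∈ Icc 0 T, 0 < φ t)
    (hφHolder : ∃ α ∈ Ioo (0:ℝ) 1, ∃ R > (0:ℝ),
      ∀ x ∈ Icc 0 T, ∀ y ∈ Icc 0 T, |φ x - φ y| ≤ R * |x - y| ^ α)
    (hφC2 : ContDiffOn ℝ 2 φ (Ioo 0 T))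
    (hODE : ∀ t ∈ Ioo 0 T,
      deriv (deriv φ) t - m t * deriv φ t - k t * φ t + φ t ^ (q - 1) / t ^ s = 0) :
    ∃ t₀ ∈ Ioo 0 T, ∀ t ∈ Icc 0 t₀, φ t ≤ φ 0 :=
  stmt_2_general T s q c hT hs0 hc m A hmA hA k hk φ hφpos hφHolder hφC2 hODE
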